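/- arXiv:2210.15390 — 4 statements merged into one kernel-verified Lean document; each statement's English description precedes it below -/
import Mathlib

section
/- Let D ≥ 1, M ≥ 1, and let p = (p_α)_{α∈ℤ₊^D} be a probability mass function on ℤ₊^D with p_α > 0 for every α. Let A_1,…,A_M be i.i.d. ℤ₊^D-valued random variables with law p and set N_α := #{1 ≤ i ≤ M : A_i = α}. For each α ∈ ℤ₊^D and each n ≥ 1 let F_α^n be an integrable real-valued random variable with E[F_α^n] = μ_α (the same value for all n ≥ 1), the whole family (F_α^n)_{α,n} being independent of (A_1,…,A_M); set F_α^0 := 0. Assume Σ_{α∈ℤ₊^D} sup_{n≥1} E[|F_α^n|] < ∞. Then the randomized multi-index estimator F̂ := Σ_{α∈ℤ₊^D} (N_α/(M p_α)) F_α^{N_α} (almost surely a finite sum, since at most M of the counts N_α are nonzero) is integrable and is free from discretization bias: E[F̂] = Σ_{α∈ℤ₊^D} μ_α, the series on the right converging absolutely. -/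
/-!
Since `E[N_α] = M p_α`, the `α`-th term of `F̂` is `(N_α / E[N_α]) F_α^{N_α}`. Splitting over
the value `k` of `N_α`, which is independent of `F_α^k`, its mean is
`Σ_k (k P(N_α = k) / E[N_α]) E[F_α^k]`, and these size-biased weights form a probability
distribution on `k ≥ 1`, where `E[F_α^k] = μ_α`. The same computation with `|F_α^k|` bounds the
mean absolute value of the `α`-th term by `sup_{n ≥ 1} E|F_α^n|`, which is summable in `α`, so the
expectation commutes with the sum over `α`.
-/

open MeasureTheory ProbabilityTheory
open scoped Classical

theorem apply_eq_sum_indicator {Ω E : Type*} [AddCommMonoid E] {N : Ω → ℕ} {s : Finset ℕ}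
    (hs : ∀ ω, N ω ∈ s) (Y : ℕ → Ω → E) (ω : Ω) :
    Y (N ω) ω = ∑ k ∈ s, (N ⁻¹' {k}).indicator (Y k) ω := by
  rw [Finset.sum_eq_single_of_mem (N ω) (hs ω) fun k _ hk => ?_]
  · simp
  · simp [Ne.symm hk]

section RandomIndex

variable {Ω : Type*} [MeasurableSpace Ω] {μ : Measure Ω} {N : Ω → ℕ} {s : Finset ℕ}

theorem integrable_apply_of_mem {E : Type*} [NormedAddCommGroup E] (hN : Measurable N)
    (hs : ∀ ω, N ω ∈ s) {Y : ℕ → Ω → E} (hY : ∀ k, Integrable (Y k) μ) :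
    Integrable (fun ω => Y (N ω) ω) μ := by
  simp_rw [apply_eq_sum_indicator hs Y]
  exact integrable_finsetSum _ fun k _ => (hY k).indicator (hN (measurableSet_singleton k))

theorem integral_apply_eq_sum_of_indepFun (hN : Measurable N) (hs : ∀ ω, N ω ∈ s)
    {Y : ℕ → Ω → ℝ} (hY : ∀ k, Integrable (Y k) μ) (hind : ∀ k, IndepFun N (Y k) μ) :
    ∫ ω, Y (N ω) ω ∂μ = ∑ k ∈ s, μ.real (N ⁻¹' {k}) * ∫ ω, Y k ω ∂μ := by
  simp_rw [apply_eq_sum_indicator hs Y]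
  rw [integral_finsetSum _ fun k _ => (hY k).indicator (hN (measurableSet_singleton k))]
  refine Finset.sum_congr rfl fun k _ => ?_
  rw [integral_indicator (hN (measurableSet_singleton k))]
  exact Indep.setIntegral_eq_mul (f := id) hN.comap_le (hind k) (hY k).aemeasurable
    ⟨{k}, measurableSet_singleton k, rfl⟩ aestronglyMeasurable_id

variable {c : ℝ}

theorem integral_div_mul_apply_eq_sum (hN : Measurable N) (hs : ∀ ω, N ω ∈ s)
    {Y : ℕ → Ω → ℝ} (hY : ∀ k, Integrable (Y k) μ) (hind : ∀ k, IndepFun N (Y k) μ) :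
    ∫ ω, (N ω / c) * Y (N ω) ω ∂μ = ∑ k ∈ s, μ.real (N ⁻¹' {k}) * k / c * ∫ ω, Y k ω ∂μ := by
  rw [integral_apply_eq_sum_of_indepFun (Y := fun k ω => (k / c) * Y k ω) hN hs
    (fun k => (hY k).const_mul _) fun k => (hind k).comp measurable_id (measurable_const_mul _)]
  refine Finset.sum_congr rfl fun k _ => ?_
  rw [integral_const_mul]
  ring

variable [IsFiniteMeasure μ]

theorem integral_natCast_eq_sum (hN : Measurable N) (hs : ∀ ω, N ω ∈ s) :
    ∫ ω, (N ω : ℝ) ∂μ = ∑ k ∈ s, μ.real (N ⁻¹' {k}) * k := by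
  rw [integral_congr_ae (Filter.Eventually.of_forall
    (apply_eq_sum_indicator hs fun k (_ : Ω) => (k : ℝ))), integral_finsetSum]
  · simp_rw [integral_indicator_const _ (hN (measurableSet_singleton _)), smul_eq_mul]
  · exact fun k _ => (integrable_const (k : ℝ)).indicator (hN (measurableSet_singleton k))

theorem sum_measureReal_mul_div_eq_one (hN : Measurable N) (hs : ∀ ω, N ω ∈ s)
    (hc : ∫ ω, (N ω : ℝ) ∂μ = c) (hc0 : c ≠ 0) :
    ∑ k ∈ s, μ.real (N ⁻¹' {k}) * k / c = 1 := by
  rw [← Finset.sum_div, ← integral_natCast_eq_sum hN hs, hc, div_self hc0]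

theorem integral_div_mul_apply_of_indepFun (hN : Measurable N) (hs : ∀ ω, N ω ∈ s)
    (hc : ∫ ω, (N ω : ℝ) ∂μ = c) (hc0 : c ≠ 0) {Y : ℕ → Ω → ℝ} (hY : ∀ k, Integrable (Y k) μ)
    (hind : ∀ k, IndepFun N (Y k) μ) {a : ℝ} (hmean : ∀ k ≠ 0, ∫ ω, Y k ω ∂μ = a) :
    ∫ ω, (N ω / c) * Y (N ω) ω ∂μ = a := by
  rw [integral_div_mul_apply_eq_sum hN hs hY hind]
  calc ∑ k ∈ s, μ.real (N ⁻¹' {k}) * k / c * ∫ ω, Y k ω ∂μ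
      = ∑ k ∈ s, μ.real (N ⁻¹' {k}) * k / c * a := by
        refine Finset.sum_congr rfl fun k _ => ?_
        rcases eq_or_ne k 0 with rfl | hk
        · simp
        · rw [hmean k hk]
    _ = a := by rw [← Finset.sum_mul, sum_measureReal_mul_div_eq_one hN hs hc hc0, one_mul]

theorem integral_abs_div_mul_apply_le (hN : Measurable N) (hs : ∀ ω, N ω ∈ s)
    (hc : ∫ ω, (N ω : ℝ) ∂μ = c) (hc0 : c ≠ 0) {Y : ℕ → Ω → ℝ} (hY : ∀ k, Integrable (Y k) μ)
    (hind : ∀ k, IndepFun N (Y k) μ) {B : ℝ} (hB : ∀ k ≠ 0, ∫ ω, |Y k ω| ∂μ ≤ B) :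
    ∫ ω, |(N ω / c) * Y (N ω) ω| ∂μ ≤ B := by
  have hc_pos : 0 < c := (hc ▸ integral_nonneg fun ω => (N ω).cast_nonneg).lt_of_ne' hc0
  have hweight : ∀ k : ℕ, 0 ≤ μ.real (N ⁻¹' {k}) * k / c := fun k => by positivity
  simp_rw [abs_mul, abs_of_nonneg (div_nonneg (Nat.cast_nonneg _) hc_pos.le)]
  rw [integral_div_mul_apply_eq_sum hN hs (fun k => (hY k).abs)
    fun k => (hind k).comp measurable_id continuous_abs.measurable]
  calc ∑ k ∈ s, μ.real (N ⁻¹' {k}) * k / c * ∫ ω, |Y k ω| ∂μ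
      ≤ ∑ k ∈ s, μ.real (N ⁻¹' {k}) * k / c * B := by
        refine Finset.sum_le_sum fun k _ => ?_
        rcases eq_or_ne k 0 with rfl | hk
        · simp
        · exact mul_le_mul_of_nonneg_left (hB k hk) (hweight k)
    _ = B := by rw [← Finset.sum_mul, sum_measureReal_mul_div_eq_one hN hs hc hc0, one_mul]

end RandomIndex

theorem measurable_card_filter_eq {Ω ι β : Type*} [MeasurableSpace Ω] [Fintype ι]
    [MeasurableSpace β] [MeasurableSingletonClass β] [DecidableEq β] {A : ι → Ω → β}
    (hA : ∀ i, Measurable (A i)) (b : β) :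
    Measurable fun ω => (Finset.univ.filter fun i => A i ω = b).card := by
  simp_rw [Finset.card_filter]
  exact Finset.measurable_sum _ fun i _ =>
    measurable_const.piecewise (hA i (measurableSet_singleton b)) measurable_const

theorem integral_card_filter_eq_sum {Ω ι β : Type*} [MeasurableSpace Ω] {μ : Measure Ω}
    [IsFiniteMeasure μ] [Fintype ι] [MeasurableSpace β] [MeasurableSingletonClass β]
    [DecidableEq β] {A : ι → Ω → β} (hA : ∀ i, Measurable (A i)) (b : β) :
    ∫ ω, ((Finset.univ.filter fun i => A i ω = b).card : ℝ) ∂μ =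
      ∑ i, μ.real (A i ⁻¹' {b}) := by
  have hcard : ∀ ω, ((Finset.univ.filter fun i => A i ω = b).card : ℝ) =
      ∑ i, (A i ⁻¹' {b}).indicator 1 ω := fun ω => by
    simp only [Finset.natCast_card_filter, Set.indicator_apply, Set.mem_preimage,
      Set.mem_singleton_iff, Pi.one_apply]
  simp_rw [hcard]
  rw [integral_finsetSum]
  · simp_rw [integral_indicator_one (hA _ (measurableSet_singleton b))]
  · exact fun i _ => (integrable_const (1 : ℝ)).indicator (hA i (measurableSet_singleton b))

theorem integrable_tsum_of_tsum_lintegral_ne_top {α ι E : Type*} [MeasurableSpace α]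
    {μ : Measure α} [NormedAddCommGroup E] [CompleteSpace E] [Countable ι] {f : ι → α → E}
    (hf : ∀ i, AEStronglyMeasurable (f i) μ) (hf' : ∑' i, ∫⁻ a, ‖f i a‖ₑ ∂μ ≠ ⊤) :
    Integrable (fun a => ∑' i, f i a) μ := by
  have hlint : ∫⁻ a, ∑' i, ‖f i a‖ₑ ∂μ = ∑' i, ∫⁻ a, ‖f i a‖ₑ ∂μ :=
    lintegral_tsum fun i => (hf i).enorm
  have hsum : ∀ᵐ a ∂μ, Summable fun i => f i a := by
    filter_upwards [ae_lt_top' (AEMeasurable.tsum fun i => (hf i).enorm) (hlint ▸ hf')] with a ha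
    exact (tsum_enorm_ne_top_iff_summable_norm.mp ha.ne).of_norm
  refine ⟨aestronglyMeasurable_of_tendsto_ae Filter.atTop
    (fun t => Finset.aestronglyMeasurable_fun_sum t fun i _ => hf i)
    (hsum.mono fun a ha => ha.hasSum), ?_⟩
  calc ∫⁻ a, ‖∑' i, f i a‖ₑ ∂μ ≤ ∫⁻ a, ∑' i, ‖f i a‖ₑ ∂μ :=
        lintegral_mono fun a => enorm_tsum_le_tsum_enorm
    _ < ⊤ := hlint ▸ hf'.lt_top

theorem integral_norm_le_toReal_iSup_lintegral_enorm {Ω E : Type*} [MeasurableSpace Ω]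
    {μ : Measure Ω} [NormedAddCommGroup E] {f : ℕ → Ω → E}
    (hf : ∀ n, AEStronglyMeasurable (f n) μ) (hfin : ⨆ n, ∫⁻ ω, ‖f (n + 1) ω‖ₑ ∂μ ≠ ⊤)
    {k : ℕ} (hk : k ≠ 0) :
    ∫ ω, ‖f k ω‖ ∂μ ≤ (⨆ n, ∫⁻ ω, ‖f (n + 1) ω‖ₑ ∂μ).toReal := by
  obtain ⟨n, rfl⟩ := Nat.exists_eq_succ_of_ne_zero hk
  rw [integral_norm_eq_lintegral_enorm (hf _)]
  exact ENNReal.toReal_mono hfin (le_iSup (fun n => ∫⁻ ω, ‖f (n + 1) ω‖ₑ ∂μ) n)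

theorem rMIMC_unbiased_general {Ω : Type*} [MeasurableSpace Ω]
    (μ : Measure Ω) [IsProbabilityMeasure μ]
    (D M : ℕ) (hM : 1 ≤ M)
    (p : (Fin D → ℕ) → ℝ) (hp : ∀ α, 0 < p α)
    (A : Fin M → Ω → (Fin D → ℕ)) (hAmeas : ∀ i, Measurable (A i))
    (hAlaw : ∀ i α, μ (A i ⁻¹' {α}) = ENNReal.ofReal (p α))
    (F : (Fin D → ℕ) → ℕ → Ω → ℝ)
    (hFint : ∀ α n, Integrable (F α n) μ)
    (m : (Fin D → ℕ) → ℝ)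
    (hFmean : ∀ α, ∀ n, 1 ≤ n → (∫ ω, F α n ω ∂μ) = m α)
    (hFindepA : IndepFun (fun ω => fun q : (Fin D → ℕ) × ℕ => F q.1 q.2 ω)
      (fun ω => fun i : Fin M => A i ω) μ)
    (hsummable : (∑' α : Fin D → ℕ, ⨆ n : ℕ, ∫⁻ ω, ‖F α (n + 1) ω‖₊ ∂μ) < ⊤)
    (N : (Fin D → ℕ) → Ω → ℕ)
    (hN : ∀ α ω, N α ω = (Finset.univ.filter (fun i : Fin M => A i ω = α)).card)
    (Fhat : Ω → ℝ)
    (hFhat : ∀ ω, Fhat ω = ∑' α : Fin D → ℕ,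
      ((N α ω : ℝ) / (M * p α)) * F α (N α ω) ω) :
    Integrable Fhat μ ∧ Summable (fun α : Fin D → ℕ => |m α|) ∧
      (∫ ω, Fhat ω ∂μ) = ∑' α : Fin D → ℕ, m α := by
  have hNmeas : ∀ α, Measurable (N α) := fun α =>
    funext (hN α) ▸ measurable_card_filter_eq hAmeas α
  have hNmem : ∀ α ω, N α ω ∈ Finset.range (M + 1) := fun α ω =>
    hN α ω ▸ Finset.mem_range_succ_iff.mpr
      ((Finset.card_filter_le _ _).trans_eq (Finset.card_fin M))
  have hEN : ∀ α, ∫ ω, (N α ω : ℝ) ∂μ = M * p α := fun α => by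
    simp_rw [hN, integral_card_filter_eq_sum hAmeas, measureReal_def, hAlaw,
      ENNReal.toReal_ofReal (hp α).le, Finset.sum_const, Finset.card_univ, Fintype.card_fin,
      nsmul_eq_mul]
  have hMp : ∀ α, (M * p α : ℝ) ≠ 0 := fun α =>
    mul_ne_zero (Nat.cast_ne_zero.mpr (by omega)) (hp α).ne'
  have hind : ∀ α k, IndepFun (N α) (F α k) μ := fun α k => by
    rw [funext (hN α)]
    exact (hFindepA.comp (measurable_pi_apply (α, k)) (measurable_of_countable
      fun a : Fin M → Fin D → ℕ => (Finset.univ.filter fun i => a i = α).card)).symm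
  set T := fun α => ⨆ n : ℕ, ∫⁻ ω, ‖F α (n + 1) ω‖ₑ ∂μ
  have hT : ∀ α, T α ≠ ⊤ := fun α => ((ENNReal.le_tsum α).trans_lt hsummable).ne
  have hFabs : ∀ α k, k ≠ 0 → ∫ ω, |F α k ω| ∂μ ≤ (T α).toReal := fun α _ hk =>
    integral_norm_le_toReal_iSup_lintegral_enorm (fun n => (hFint α n).1) (hT α) hk
  set g := fun α ω => (N α ω / (M * p α)) * F α (N α ω) ω
  have hg_int : ∀ α, Integrable (g α) μ := fun α =>
    integrable_apply_of_mem (Y := fun k ω => (k / (M * p α)) * F α k ω) (hNmeas α) (hNmem α)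
      fun k => (hFint α k).const_mul _
  have hg_lint : ∀ α, ∫⁻ ω, ‖g α ω‖ₑ ∂μ ≤ T α := fun α => by
    rw [← ofReal_integral_norm_eq_lintegral_enorm (hg_int α), ← ENNReal.ofReal_toReal (hT α)]
    exact ENNReal.ofReal_le_ofReal (integral_abs_div_mul_apply_le (hNmeas α) (hNmem α) (hEN α)
      (hMp α) (hFint α) (hind α) (hFabs α))
  have hg_mean : ∀ α, ∫ ω, g α ω ∂μ = m α := fun α =>
    integral_div_mul_apply_of_indepFun (hNmeas α) (hNmem α) (hEN α) (hMp α) (hFint α) (hind α)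
      fun k hk => hFmean α k (Nat.one_le_iff_ne_zero.mpr hk)
  have hm_le : ∀ α, |m α| ≤ (T α).toReal := fun α =>
    hFmean α 1 le_rfl ▸ (abs_integral_le_integral_abs).trans (hFabs α 1 one_ne_zero)
  have hg_sum : ∑' α, ∫⁻ ω, ‖g α ω‖ₑ ∂μ ≠ ⊤ :=
    ((ENNReal.tsum_le_tsum hg_lint).trans_lt hsummable).ne
  rw [funext hFhat]
  exact ⟨integrable_tsum_of_tsum_lintegral_ne_top (fun α => (hg_int α).1) hg_sum,
    .of_nonneg_of_le (fun α => abs_nonneg _) hm_le (ENNReal.summable_toReal hsummable.ne),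
    (integral_tsum (fun α => (hg_int α).1) hg_sum).trans (tsum_congr hg_mean)⟩

/-- unbiasedness of the randomized multi-index estimator. Indices
`A 1, …, A M` are drawn i.i.d. from a positive pmf `p` on `ℤ₊^D`; `N α` counts
the draws equal to `α`; the estimators `F α n` (for `n ≥ 1`) are integrable with
mean `m α` independent of `n`, `F α 0 = 0`, and the whole family `F` is
independent of the draws. If `Σ_α sup_{n ≥ 1} E|F α n| < ∞`, then
`F̂ = Σ_α (N α / (M p α)) F α (N α)` is integrable and
`E[F̂] = Σ_α m α`, the series converging absolutely. -/
theorem rMIMC_unbiased {Ω : Type*} [MeasurableSpace Ω]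
    (μ : Measure Ω) [IsProbabilityMeasure μ]
    (D M : ℕ) (hD : 1 ≤ D) (hM : 1 ≤ M)
    (p : (Fin D → ℕ) → ℝ) (hp : ∀ α, 0 < p α) (hpsum : ∑' α, p α = 1)
    (A : Fin M → Ω → (Fin D → ℕ)) (hAmeas : ∀ i, Measurable (A i))
    (hAiid : iIndepFun A μ)
    (hAlaw : ∀ i α, μ (A i ⁻¹' {α}) = ENNReal.ofReal (p α))
    (F : (Fin D → ℕ) → ℕ → Ω → ℝ)
    (hFint : ∀ α n, Integrable (F α n) μ)
    (hF0 : ∀ α ω, F α 0 ω = 0)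
    (m : (Fin D → ℕ) → ℝ)
    (hFmean : ∀ α, ∀ n, 1 ≤ n → (∫ ω, F α n ω ∂μ) = m α)
    (hFindepA : IndepFun (fun ω => fun q : (Fin D → ℕ) × ℕ => F q.1 q.2 ω)
      (fun ω => fun i : Fin M => A i ω) μ)
    (hsummable : (∑' α : Fin D → ℕ, ⨆ n : ℕ, ∫⁻ ω, ‖F α (n + 1) ω‖₊ ∂μ) < ⊤)
    (N : (Fin D → ℕ) → Ω → ℕ)
    (hN : ∀ α ω, N α ω = (Finset.univ.filter (fun i : Fin M => A i ω = α)).card)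
    (Fhat : Ω → ℝ)
    (hFhat : ∀ ω, Fhat ω = ∑' α : Fin D → ℕ,
      ((N α ω : ℝ) / (M * p α)) * F α (N α ω) ω) :
    Integrable Fhat μ ∧ Summable (fun α : Fin D → ℕ => |m α|) ∧
      (∫ ω, Fhat ω ∂μ) = ∑' α : Fin D → ℕ, m α :=
  rMIMC_unbiased_general μ D M hM p hp A hAmeas hAlaw F hFint m hFmean hFindepA hsummable N hN Fhat
    hFhat
end

section
/- Let D ≥ 1, M ≥ 1, and let p = (p_α)_{α∈ℤ₊^D} be a probability mass function on ℤ₊^D with p_α > 0 for every α. Let A_1,…,A_M be i.i.d. ℤ₊^D-valued random variables with law p and set N_α := #{1 ≤ i ≤ M : A_i = α}. For each α ∈ ℤ₊^D and each n ≥ 1 let F_α^n be a square-integrable real-valued random variable with E[F_α^n] = μ_α for all n ≥ 1, with F_α^0 := 0, such that the families (F_α^n)_{n≥1} for distinct α are mutually independent and independent of (A_1,…,A_M). Suppose there are constants V_α ≥ 0 with E[(F_α^n − μ_α)²] ≤ V_α/n for all n ≥ 1, μ_α² ≤ V_α for all α, Σ_α V_α/p_α < ∞ and Σ_α √V_α <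 ∞. Then the randomized multi-index estimator F̂ := Σ_{α∈ℤ₊^D} (N_α/(M p_α)) F_α^{N_α} is square-integrable and satisfies E[(F̂ − Σ_α μ_α)²] ≤ (4/M)·( Σ_{α∈ℤ₊^D} V_α/p_α + ( Σ_{α∈ℤ₊^D} √V_α )² ). -/
/-!
With `c_α = 1 / (M p_α)`, each term of `F̂ - Σ_α m_α` splits as
`c_α N_α (F_α^{N_α} - m_α) + c_α m_α (N_α - M p_α)`.

The first parts are orthogonal, because the families `F_α` are centred, independent across `α`
and independent of the counts. Each has second moment at most
`c_α² V_α E[N_α] = V_α / (M p_α)`. The second part is linear in the counts. Since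
`Σ_α a_α N_α = Σ_i a_{A_i}` is a sum of `M` i.i.d. terms, its variance is at most
`M Σ_α a_α² p_α = Σ_α m_α² / (M p_α) ≤ Σ_α V_α / (M p_α)`. With `(x + y)² ≤ 2x² + 2y²`, every
finite partial sum has second moment at most `(4/M) Σ_α V_α / p_α`, and Fatou's lemma carries
the bound over to the whole series.
-/

open MeasureTheory ProbabilityTheory Finset Filter
open scoped Classical ENNReal

section

variable {Ω : Type*} [MeasurableSpace Ω] {μ : Measure Ω}

theorem integral_sq_add_le {f g : Ω → ℝ} (hf : MemLp f 2 μ) (hg : MemLp g 2 μ) :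
    ∫ ω, (f ω + g ω) ^ 2 ∂μ ≤ 2 * ∫ ω, f ω ^ 2 ∂μ + 2 * ∫ ω, g ω ^ 2 ∂μ := by
  rw [← integral_const_mul, ← integral_const_mul,
    ← integral_add (hf.integrable_sq.const_mul 2) (hg.integrable_sq.const_mul 2)]
  exact integral_mono (hf.add hg).integrable_sq
    ((hf.integrable_sq.const_mul 2).add (hg.integrable_sq.const_mul 2))
    fun ω => by nlinarith [sq_nonneg (f ω - g ω)]

theorem integral_sq_sum_of_pairwise_integral_mul_eq_zero {ι : Type*} {X : ι → Ω → ℝ}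
    (hX : ∀ α, MemLp (X α) 2 μ) (horth : Pairwise fun α β => ∫ ω, X α ω * X β ω ∂μ = 0)
    (s : Finset ι) :
    ∫ ω, (∑ α ∈ s, X α ω) ^ 2 ∂μ = ∑ α ∈ s, ∫ ω, X α ω ^ 2 ∂μ := by
  have hint : ∀ α β, Integrable (fun ω => X α ω * X β ω) μ := fun α β =>
    (hX α).integrable_mul (hX β)
  simp_rw [sq, sum_mul_sum]
  rw [integral_finsetSum _ fun α _ => integrable_finsetSum _ fun β _ => hint α β]
  refine sum_congr rfl fun α hα => ?_
  rw [integral_finsetSum _ fun β _ => hint α β]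
  exact sum_eq_single_of_mem α hα fun β _ hβ => horth (Ne.symm hβ)

theorem integral_sq_sum_sub_le_of_pairwise_indepFun [IsProbabilityMeasure μ] {κ : Type*} [Fintype κ]
    {X : κ → Ω → ℝ} (hX : ∀ i, MemLp (X i) 2 μ)
    (hind : Pairwise fun i j => IndepFun (X i) (X j) μ) :
    ∫ ω, (∑ i, X i ω - ∑ i, ∫ ω, X i ω ∂μ) ^ 2 ∂μ ≤ ∑ i, ∫ ω, X i ω ^ 2 ∂μ := by
  have hsum_meas : AEMeasurable (fun ω => ∑ i, X i ω) μ :=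
    (memLp_finsetSum _ fun i _ => hX i).aestronglyMeasurable.aemeasurable
  calc _ = Var[∑ i, X i; μ] := by
        rw [variance_eq_integral (by simpa [← Finset.sum_fn] using hsum_meas)]
        simp only [Finset.sum_apply]
        rw [integral_finsetSum _ fun i _ => (hX i).integrable one_le_two]
    _ = ∑ i, Var[X i; μ] := IndepFun.variance_sum (fun i _ => hX i) fun i _ j _ hij => hind hij
    _ ≤ ∑ i, ∫ ω, X i ω ^ 2 ∂μ :=
        sum_le_sum fun i _ => variance_le_expectation_sq (hX i).aestronglyMeasurable

theorem memLp_two_and_integral_sq_le_of_hasSum {ι : Type*} [Countable ι]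
    {Z : ι → Ω → ℝ} {S : Ω → ℝ} {C : ℝ} (hZ : ∀ α, MemLp (Z α) 2 μ)
    (hS : ∀ ω, HasSum (fun α => Z α ω) (S ω))
    (hC : ∀ s : Finset ι, ∫ ω, (∑ α ∈ s, Z α ω) ^ 2 ∂μ ≤ C) :
    MemLp S 2 μ ∧ ∫ ω, S ω ^ 2 ∂μ ≤ C := by
  have hpartial : ∀ s : Finset ι, MemLp (fun ω => ∑ α ∈ s, Z α ω) 2 μ :=
    fun s => memLp_finsetSum s fun α _ => hZ α
  have hSm : AEStronglyMeasurable S μ :=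
    aestronglyMeasurable_of_tendsto_ae atTop (fun s => (hpartial s).aestronglyMeasurable)
      (ae_of_all _ hS)
  have hfatou : ∫⁻ ω, ENNReal.ofReal (S ω ^ 2) ∂μ ≤ ENNReal.ofReal C :=
    calc ∫⁻ ω, ENNReal.ofReal (S ω ^ 2) ∂μ
        = ∫⁻ ω, liminf (fun s => ENNReal.ofReal ((∑ α ∈ s, Z α ω) ^ 2)) atTop ∂μ :=
          lintegral_congr fun ω =>
            (((ENNReal.continuous_ofReal.tendsto _).comp ((hS ω).pow 2)).liminf_eq).symm
      _ ≤ liminf (fun s => ∫⁻ ω, ENNReal.ofReal ((∑ α ∈ s, Z α ω) ^ 2) ∂μ) atTop :=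
          lintegral_liminf_le' fun s =>
            ((hpartial s).aestronglyMeasurable.aemeasurable.pow_const 2).ennreal_ofReal
      _ ≤ ENNReal.ofReal C := by
          refine liminf_le_of_le ⟨0, by simp⟩ fun b hb => ?_
          obtain ⟨s, hs⟩ := hb.exists
          rw [← ofReal_integral_eq_lintegral_ofReal (hpartial s).integrable_sq
            (ae_of_all _ fun ω => sq_nonneg _)] at hs
          exact hs.trans (ENNReal.ofReal_le_ofReal (hC s))
  have hSsq : Integrable (fun ω => S ω ^ 2) μ := by
    refine ⟨hSm.pow 2, (hasFiniteIntegral_iff_ofReal (ae_of_all _ fun ω => sq_nonneg _)).2 ?_⟩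
    exact hfatou.trans_lt ENNReal.ofReal_lt_top
  refine ⟨(memLp_two_iff_integrable_sq hSm).2 hSsq, ?_⟩
  have hC0 : 0 ≤ C := by simpa using hC ∅
  rw [integral_eq_lintegral_of_nonneg_ae (ae_of_all _ fun ω => sq_nonneg _) (hSm.pow 2)]
  exact ENNReal.toReal_le_of_le_ofReal hC0 hfatou

theorem integral_comp_eq_sum_of_measureReal_preimage [IsFiniteMeasure μ] {ι : Type*}
    [MeasurableSpace ι] [MeasurableSingletonClass ι] {A : Ω → ι} (hA : Measurable A) {p : ι → ℝ}
    (hlaw : ∀ α, μ.real (A ⁻¹' {α}) = p α) {h : ι → ℝ} (s : Finset ι)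
    (hs : ∀ α ∉ s, h α = 0) :
    ∫ ω, h (A ω) ∂μ = ∑ α ∈ s, h α * p α := by
  have hsplit : ∀ ω, h (A ω) = ∑ α ∈ s, (A ⁻¹' {α}).indicator (fun _ => h α) ω := by
    intro ω
    simp only [Set.indicator, Set.mem_preimage, Set.mem_singleton_iff, sum_ite_eq]
    split_ifs with hω
    · rfl
    · exact hs _ hω
  simp_rw [hsplit]
  rw [integral_finsetSum _ fun α _ =>
    (integrable_const _).indicator (hA (measurableSet_singleton α))]
  refine sum_congr rfl fun α _ => ?_
  rw [integral_indicator_const _ (hA (measurableSet_singleton α)), hlaw, smul_eq_mul, mul_comm]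

theorem ProbabilityTheory.IndepFun.integral_comp_eq_sum {T E : Type*} [MeasurableSpace T]
    [MeasurableSingletonClass T] [MeasurableSpace E] {L : Ω → T} {Φ : Ω → E}
    (hind : IndepFun L Φ μ) (hL : Measurable L) (R : Finset T) (hR : ∀ ω, L ω ∈ R)
    {G : T → E → ℝ} (hG : ∀ t, Measurable (G t))
    (hGΦ : ∀ t ∈ R, Integrable (fun ω => G t (Φ ω)) μ) :
    ∫ ω, G (L ω) (Φ ω) ∂μ = ∑ t ∈ R, μ.real (L ⁻¹' {t}) * ∫ ω, G t (Φ ω) ∂μ := by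
  have hsplit : ∀ ω, G (L ω) (Φ ω) = ∑ t ∈ R, ({t} : Set T).indicator 1 (L ω) * G t (Φ ω) := by
    intro ω
    rw [sum_eq_single_of_mem (L ω) (hR ω) fun t _ ht => by simp [Ne.symm ht]]
    simp
  have hind_t : ∀ t, IndepFun (fun ω => ({t} : Set T).indicator (1 : T → ℝ) (L ω))
      (fun ω => G t (Φ ω)) μ :=
    fun t => hind.comp (measurable_one.indicator (measurableSet_singleton t)) (hG t)
  have hind_meas : ∀ t, Measurable fun ω => ({t} : Set T).indicator (1 : T → ℝ) (L ω) :=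
    fun t => (measurable_one.indicator (measurableSet_singleton t)).comp hL
  simp_rw [hsplit]
  rw [integral_finsetSum _ fun t ht => ?_]
  · refine sum_congr rfl fun t ht => ?_
    rw [(hind_t t).integral_fun_mul_eq_mul_integral (hind_meas t).aestronglyMeasurable
      (hGΦ t ht).aestronglyMeasurable]
    congr 1
    rw [← integral_indicator_one (hL (measurableSet_singleton t))]
    rfl
  · refine (hGΦ t ht).bdd_mul (hind_meas t).aestronglyMeasurable (c := 1) (ae_of_all _ fun ω => ?_)
    by_cases h : L ω = t <;> simp [h]

theorem memLp_eval_of_mem_finset {T : Type*} [MeasurableSpace T] [MeasurableSingletonClass T]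
    {L : Ω → T} (hL : Measurable L) (R : Finset T) (hR : ∀ ω, L ω ∈ R) {q : ℝ≥0∞}
    {G : T → Ω → ℝ} (hG : ∀ t ∈ R, MemLp (G t) q μ) :
    MemLp (fun ω => G (L ω) ω) q μ := by
  have hsplit : (fun ω => G (L ω) ω) = fun ω => ∑ t ∈ R, (L ⁻¹' {t}).indicator (G t) ω := by
    ext ω
    rw [sum_eq_single_of_mem (L ω) (hR ω) fun t _ ht => by simp [Ne.symm ht]]
    simp
  rw [hsplit]
  exact memLp_finsetSum R fun t ht => (hG t ht).indicator (hL (measurableSet_singleton t))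

theorem integral_sq_index_mul_sub_le [IsProbabilityMeasure μ] {F : ℕ → Ω → ℝ} {L : Ω → ℕ}
    (hind : IndepFun L (fun ω n => F n ω) μ) (hL : Measurable L) (R : Finset ℕ)
    (hR : ∀ ω, L ω ∈ R) (hF : ∀ n, MemLp (F n) 2 μ) {m V : ℝ}
    (hvar : ∀ n, 1 ≤ n → ∫ ω, (F n ω - m) ^ 2 ∂μ ≤ V / n) :
    ∫ ω, (L ω * (F (L ω) ω - m)) ^ 2 ∂μ ≤ V * ∫ ω, (L ω : ℝ) ∂μ := by
  have hsq : ∀ n, Integrable (fun ω => (n * (F n ω - m)) ^ 2) μ := fun n =>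
    (((hF n).sub (memLp_const m)).const_mul n).integrable_sq
  rw [hind.integral_comp_eq_sum hL R hR (G := fun n φ => (n * (φ n - m)) ^ 2) (fun n => by fun_prop)
      fun n _ => hsq n,
    hind.integral_comp_eq_sum hL R hR (G := fun n _ => (n : ℝ)) (fun n => measurable_const)
      fun n _ => integrable_const _, mul_sum]
  refine sum_le_sum fun n _ => ?_
  simp only [integral_const, probReal_univ, smul_eq_mul, one_mul]
  rcases n.eq_zero_or_pos with rfl | hn
  · simp
  have hscale : ∫ ω, (n * (F n ω - m)) ^ 2 ∂μ = n ^ 2 * ∫ ω, (F n ω - m) ^ 2 ∂μ := by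
    simp_rw [mul_pow]
    exact integral_const_mul _ _
  calc μ.real (L ⁻¹' {n}) * ∫ ω, (n * (F n ω - m)) ^ 2 ∂μ
      ≤ μ.real (L ⁻¹' {n}) * (n ^ 2 * (V / n)) := by
        rw [hscale]
        gcongr
        exact hvar n hn
    _ = V * (μ.real (L ⁻¹' {n}) * n) := by
        field_simp

theorem integral_index_mul_sub_mul_eq_zero [IsProbabilityMeasure μ] {F G : ℕ → Ω → ℝ} {L L' : Ω → ℕ}
    (hFG : IndepFun (fun ω n => F n ω) (fun ω n => G n ω) μ)
    (hind : IndepFun (fun ω => (L ω, L' ω)) (fun ω => (fun n => F n ω, fun n => G n ω)) μ)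
    (hL : Measurable L) (hL' : Measurable L') (R : Finset ℕ) (hR : ∀ ω, L ω ∈ R)
    (hR' : ∀ ω, L' ω ∈ R) (hF : ∀ n, MemLp (F n) 2 μ) (hG : ∀ n, MemLp (G n) 2 μ) {m m' : ℝ}
    (hFm : ∀ n, 1 ≤ n → ∫ ω, F n ω ∂μ = m) :
    ∫ ω, (L ω * (F (L ω) ω - m)) * (L' ω * (G (L' ω) ω - m')) ∂μ = 0 := by
  have hcentered : ∀ n n', 1 ≤ n → ∫ ω, (F n ω - m) * (G n' ω - m') ∂μ = 0 := by
    intro n n' hn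
    have hcomp := hFG.comp (φ := fun φ => φ n - m) (ψ := fun ψ => ψ n' - m')
      (by fun_prop) (by fun_prop)
    rw [show ∫ ω, (F n ω - m) * (G n' ω - m') ∂μ = _ from
      hcomp.integral_fun_mul_eq_mul_integral ((hF n).sub (memLp_const m)).aestronglyMeasurable
        ((hG n').sub (memLp_const m')).aestronglyMeasurable]
    simp [integral_sub ((hF n).integrable one_le_two) (integrable_const m), hFm n hn]
  rw [hind.integral_comp_eq_sum (hL.prodMk hL') (R ×ˢ R) (fun ω => mem_product.2 ⟨hR ω, hR' ω⟩)
    (G := fun k φ => (k.1 * (φ.1 k.1 - m)) * (k.2 * (φ.2 k.2 - m'))) (fun k => by fun_prop)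
    fun k _ => (((hF k.1).sub (memLp_const m)).const_mul k.1).integrable_mul
      (((hG k.2).sub (memLp_const m')).const_mul k.2)]
  refine sum_eq_zero fun ⟨n, n'⟩ _ => ?_
  rcases n.eq_zero_or_pos with rfl | hn
  · simp
  have hfactor : ∀ ω, (n * (F n ω - m)) * (n' * (G n' ω - m'))
      = (n * n') * ((F n ω - m) * (G n' ω - m')) := fun ω => by ring
  simp only [hfactor, integral_const_mul, hcentered n n' hn, mul_zero]

section drawCount

variable {ι : Type*} [DecidableEq ι] {M : ℕ}

def drawCount (a : Fin M → ι) (α : ι) : ℕ := #{i | a i = α}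

theorem drawCount_le (a : Fin M → ι) (α : ι) : drawCount a α ≤ M :=
  (card_filter_le _ _).trans (card_fin M).le

theorem drawCount_eq_zero_of_notMem_range {a : Fin M → ι} {α : ι} (h : α ∉ Set.range a) :
    drawCount a α = 0 :=
  card_eq_zero.2 (filter_eq_empty_iff.2 fun i _ hi => h ⟨i, hi⟩)

theorem summable_apply_drawCount {E : Type*} [AddCommMonoid E] [TopologicalSpace E]
    (a : Fin M → ι) {f : ι → ℕ → E} (hf : ∀ α, f α 0 = 0) :
    Summable fun α => f α (drawCount a α) :=
  summable_of_ne_finset_zero (s := univ.image a) fun α hα => by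
    rw [drawCount_eq_zero_of_notMem_range fun ⟨i, hi⟩ => hα (mem_image.2 ⟨i, mem_univ _, hi⟩), hf]

theorem measurable_drawCount [MeasurableSpace ι] [Countable ι] [MeasurableSingletonClass ι]
    (α : ι) : Measurable fun a : Fin M → ι => drawCount a α :=
  measurable_of_countable _

theorem sum_mul_drawCount (a : Fin M → ι) (c : ι → ℝ) (s : Finset ι) :
    ∑ α ∈ s, c α * drawCount a α = ∑ i, ∑ α ∈ s, ({α} : Set ι).indicator (fun _ => c α) (a i) := by
  simp only [drawCount, natCast_card_filter, mul_sum]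
  rw [sum_comm]
  refine sum_congr rfl fun i _ => sum_congr rfl fun α _ => ?_
  by_cases h : a i = α <;> simp [h]

variable [MeasurableSpace ι] [MeasurableSingletonClass ι] {A : Fin M → Ω → ι} {p : ι → ℝ}

theorem measurable_drawCount_comp [Countable ι] (hA : ∀ i, Measurable (A i)) (α : ι) :
    Measurable fun ω => drawCount (fun i => A i ω) α :=
  (measurable_drawCount α).comp (measurable_pi_lambda _ hA)

theorem memLp_drawCount_eval [Countable ι] (hA : ∀ i, Measurable (A i)) (α : ι)
    {q : ℝ≥0∞} {G : ℕ → Ω → ℝ} (hG : ∀ n, MemLp (G n) q μ) :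
    MemLp (fun ω => G (drawCount (fun i => A i ω) α) ω) q μ :=
  memLp_eval_of_mem_finset (measurable_drawCount_comp hA α) (range (M + 1))
    (fun _ => mem_range_succ_iff.2 (drawCount_le _ α)) fun n _ => hG n

theorem integral_drawCount [IsProbabilityMeasure μ] (hA : ∀ i, Measurable (A i))
    (hlaw : ∀ i α, μ.real (A i ⁻¹' {α}) = p α) (α : ι) :
    ∫ ω, (drawCount (fun i => A i ω) α : ℝ) ∂μ = M * p α := by
  have h := fun ω => sum_mul_drawCount (fun i => A i ω) (fun _ => 1) {α}
  simp only [sum_singleton, one_mul] at h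
  simp_rw [h]
  rw [integral_finsetSum _ fun i _ => ?_]
  · rw [sum_congr rfl fun i _ => integral_comp_eq_sum_of_measureReal_preimage (hA i) (hlaw i) {α}
      (h := ({α} : Set ι).indicator fun _ => 1)
      fun β hβ => Set.indicator_of_notMem (by simpa using hβ) _]
    simp
  · exact (integrable_const 1).indicator ((hA i) (measurableSet_singleton α))

theorem integral_sq_sum_mul_drawCount_sub_le [IsProbabilityMeasure μ]
    (hA : ∀ i, Measurable (A i)) (hAind : iIndepFun A μ)
    (hlaw : ∀ i α, μ.real (A i ⁻¹' {α}) = p α) (c : ι → ℝ) (s : Finset ι) :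
    ∫ ω, (∑ α ∈ s, c α * (drawCount (fun i => A i ω) α - M * p α)) ^ 2 ∂μ
      ≤ M * ∑ α ∈ s, c α ^ 2 * p α := by
  set g : ι → ℝ := fun a => ∑ α ∈ s, ({α} : Set ι).indicator (fun _ => c α) a with hg
  have hg_meas : Measurable g :=
    Finset.measurable_sum _ fun α _ => measurable_const.indicator (measurableSet_singleton α)
  have hg_eq : ∀ α, g α = if α ∈ s then c α else 0 := fun α => by
    simp [hg, Set.indicator_apply]
  have hgL2 : ∀ i, MemLp (fun ω => g (A i ω)) 2 μ := fun i =>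
    memLp_finsetSum s fun α _ => (memLp_const (c α)).indicator (hA i (measurableSet_singleton α))
  have hmean : ∀ i, ∫ ω, g (A i ω) ∂μ = ∑ α ∈ s, c α * p α := fun i => by
    rw [integral_comp_eq_sum_of_measureReal_preimage (hA i) (hlaw i) s
      fun α hα => by simp [hg_eq, hα]]
    exact sum_congr rfl fun α hα => by simp [hg_eq, hα]
  have hsq : ∀ i, ∫ ω, g (A i ω) ^ 2 ∂μ = ∑ α ∈ s, c α ^ 2 * p α := fun i => by
    rw [integral_comp_eq_sum_of_measureReal_preimage (hA i) (hlaw i) (h := fun a => g a ^ 2) s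
      fun α hα => by simp [hg_eq, hα]]
    exact sum_congr rfl fun α hα => by simp [hg_eq, hα]
  have hcount : ∀ ω, ∑ α ∈ s, c α * (drawCount (fun i => A i ω) α - M * p α)
      = ∑ i, g (A i ω) - ∑ i, ∫ ω, g (A i ω) ∂μ := fun ω => by
    rw [sum_congr rfl fun i _ => hmean i, sum_const, card_univ, Fintype.card_fin, nsmul_eq_mul,
      mul_sum]
    simp only [mul_sub, sum_sub_distrib, sum_mul_drawCount, hg]
    congr 1
    exact sum_congr rfl fun α _ => by ring
  simp_rw [hcount]
  calc _ ≤ ∑ i, ∫ ω, g (A i ω) ^ 2 ∂μ :=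
        integral_sq_sum_sub_le_of_pairwise_indepFun hgL2 fun i j hij =>
          (hAind.indepFun hij).comp hg_meas hg_meas
    _ = M * ∑ α ∈ s, c α ^ 2 * p α := by simp [hsq]

end drawCount

section estimator

variable {ι : Type*} [MeasurableSpace ι] [MeasurableSingletonClass ι] [Countable ι]
  [DecidableEq ι] [IsProbabilityMeasure μ] {M : ℕ} {A : Fin M → Ω → ι} {F : ι → ℕ → Ω → ℝ}
  {p m V : ι → ℝ}

theorem integral_sq_sum_mul_drawCount_mul_sub_le (hA : ∀ i, Measurable (A i))
    (hlaw : ∀ i α, μ.real (A i ⁻¹' {α}) = p α) (hF : ∀ α n, MemLp (F α n) 2 μ)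
    (hFm : ∀ α n, 1 ≤ n → ∫ ω, F α n ω ∂μ = m α)
    (hFind : iIndepFun (fun α ω n => F α n ω) μ)
    (hFA : IndepFun (fun ω (q : ι × ℕ) => F q.1 q.2 ω) (fun ω i => A i ω) μ)
    (hvar : ∀ α n, 1 ≤ n → ∫ ω, (F α n ω - m α) ^ 2 ∂μ ≤ V α / n) (b : ι → ℝ) (s : Finset ι) :
    ∫ ω, (∑ α ∈ s, b α * (drawCount (fun i => A i ω) α *
        (F α (drawCount (fun i => A i ω) α) ω - m α))) ^ 2 ∂μ
      ≤ M * ∑ α ∈ s, b α ^ 2 * V α * p α := by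
  set N : ι → Ω → ℕ := fun α ω => drawCount (fun i => A i ω) α
  have hN : ∀ α, Measurable (N α) := measurable_drawCount_comp hA
  have hNR : ∀ α ω, N α ω ∈ range (M + 1) := fun α ω =>
    mem_range_succ_iff.2 (drawCount_le _ α)
  have hind : ∀ α β, IndepFun (fun ω => (N α ω, N β ω))
      (fun ω => (fun n => F α n ω, fun n => F β n ω)) μ := fun α β =>
    hFA.symm.comp (measurable_drawCount α |>.prodMk (measurable_drawCount β))
      (ψ := fun φ : ι × ℕ → ℝ => (fun n => φ (α, n), fun n => φ (β, n))) (by fun_prop)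
  have hX : ∀ α, MemLp (fun ω => b α * (N α ω * (F α (N α ω) ω - m α))) 2 μ := fun α =>
    memLp_drawCount_eval hA α (G := fun n ω => b α * (n * (F α n ω - m α)))
      fun n => (((hF α n).sub (memLp_const _)).const_mul _).const_mul _
  rw [integral_sq_sum_of_pairwise_integral_mul_eq_zero hX ?orth, mul_sum]
  case orth =>
    intro α β hαβ
    have hfactor : ∀ ω,
        b α * (N α ω * (F α (N α ω) ω - m α)) * (b β * (N β ω * (F β (N β ω) ω - m β)))
        = b α * b β * ((N α ω * (F α (N α ω) ω - m α)) * (N β ω * (F β (N β ω) ω - m β))) :=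
      fun ω => by ring
    simp only [hfactor, integral_const_mul,
      integral_index_mul_sub_mul_eq_zero (hFind.indepFun hαβ) (hind α β) (hN α) (hN β) _ (hNR α)
        (hNR β) (hF α) (hF β) (hFm α), mul_zero]
  refine sum_le_sum fun α _ => ?_
  have hscale : ∀ ω, (b α * (N α ω * (F α (N α ω) ω - m α))) ^ 2
      = b α ^ 2 * (N α ω * (F α (N α ω) ω - m α)) ^ 2 := fun ω => by ring
  have hdiag : ∫ ω, (N α ω * (F α (N α ω) ω - m α)) ^ 2 ∂μ ≤ V α * (M * p α) :=
    (integral_sq_index_mul_sub_le ((hind α α).comp measurable_fst measurable_fst)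
      (hN α) _ (hNR α) (hF α) (hvar α)).trans_eq (by rw [← integral_drawCount hA hlaw α]; rfl)
  simp only [hscale, integral_const_mul]
  calc b α ^ 2 * ∫ ω, (N α ω * (F α (N α ω) ω - m α)) ^ 2 ∂μ ≤ b α ^ 2 * (V α * (M * p α)) := by
        gcongr
    _ = M * (b α ^ 2 * V α * p α) := by ring

theorem integral_sq_sum_estimator_sub_le (hM : 1 ≤ M) (hp : ∀ α, 0 < p α)
    (hA : ∀ i, Measurable (A i)) (hAind : iIndepFun A μ)
    (hlaw : ∀ i α, μ.real (A i ⁻¹' {α}) = p α) (hF : ∀ α n, MemLp (F α n) 2 μ)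
    (hFm : ∀ α n, 1 ≤ n → ∫ ω, F α n ω ∂μ = m α)
    (hFind : iIndepFun (fun α ω n => F α n ω) μ)
    (hFA : IndepFun (fun ω (q : ι × ℕ) => F q.1 q.2 ω) (fun ω i => A i ω) μ)
    (hvar : ∀ α n, 1 ≤ n → ∫ ω, (F α n ω - m α) ^ 2 ∂μ ≤ V α / n)
    (hmV : ∀ α, m α ^ 2 ≤ V α) (s : Finset ι) :
    ∫ ω, (∑ α ∈ s, (drawCount (fun i => A i ω) α / (M * p α) *
        F α (drawCount (fun i => A i ω) α) ω - m α)) ^ 2 ∂μ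
      ≤ 4 / M * ∑ α ∈ s, V α / p α := by
  set N : ι → Ω → ℕ := fun α ω => drawCount (fun i => A i ω) α
  have hM0 : (M : ℝ) ≠ 0 := by positivity
  have hsplit : ∀ ω, ∑ α ∈ s, (N α ω / (M * p α) * F α (N α ω) ω - m α)
      = ∑ α ∈ s, 1 / (M * p α) * (N α ω * (F α (N α ω) ω - m α))
        + ∑ α ∈ s, m α / (M * p α) * (N α ω - M * p α) := fun ω => by
    rw [← sum_add_distrib]
    exact sum_congr rfl fun α _ => by field_simp [(hp α).ne']; ring
  have hX : MemLp (fun ω => ∑ α ∈ s, 1 / (M * p α) * (N α ω * (F α (N α ω) ω - m α))) 2 μ :=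
    memLp_finsetSum s fun α _ => memLp_drawCount_eval hA α
      fun n => (((hF α n).sub (memLp_const _)).const_mul _).const_mul _
  have hY : MemLp (fun ω => ∑ α ∈ s, m α / (M * p α) * (N α ω - M * p α)) 2 μ :=
    memLp_finsetSum s fun α _ => memLp_drawCount_eval hA α
      (G := fun n _ => m α / (M * p α) * (n - M * p α)) fun n => memLp_const _
  have hXbound : M * ∑ α ∈ s, (1 / (M * p α)) ^ 2 * V α * p α = (∑ α ∈ s, V α / p α) / M := by
    rw [mul_sum, sum_div]
    exact sum_congr rfl fun α _ => by field_simp [(hp α).ne']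
  have hYbound : M * ∑ α ∈ s, (m α / (M * p α)) ^ 2 * p α ≤ (∑ α ∈ s, V α / p α) / M := by
    rw [mul_sum, sum_div]
    refine sum_le_sum fun α _ => ?_
    rw [show M * ((m α / (M * p α)) ^ 2 * p α) = m α ^ 2 / p α / M by field_simp [(hp α).ne']]
    gcongr
    · exact (hp α).le
    · exact hmV α
  calc _ = ∫ ω, ((∑ α ∈ s, 1 / (M * p α) * (N α ω * (F α (N α ω) ω - m α)))
          + ∑ α ∈ s, m α / (M * p α) * (N α ω - M * p α)) ^ 2 ∂μ :=
        integral_congr_ae (ae_of_all _ fun ω => congrArg (· ^ 2) (hsplit ω))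
    _ ≤ _ := integral_sq_add_le hX hY
    _ ≤ 2 * ((∑ α ∈ s, V α / p α) / M) + 2 * ((∑ α ∈ s, V α / p α) / M) := by
        gcongr
        · exact (integral_sq_sum_mul_drawCount_mul_sub_le hA hlaw hF hFm hFind hFA hvar _
            s).trans_eq hXbound
        · exact (integral_sq_sum_mul_drawCount_sub_le hA hAind hlaw _ s).trans hYbound
    _ = 4 / M * ∑ α ∈ s, V α / p α := by ring

end estimator

end

theorem rMIMC_variance_bound_general {Ω : Type*} [MeasurableSpace Ω]
    (μ : Measure Ω) [IsProbabilityMeasure μ]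
    (D M : ℕ) (hM : 1 ≤ M)
    (p : (Fin D → ℕ) → ℝ) (hp : ∀ α, 0 < p α)
    (A : Fin M → Ω → (Fin D → ℕ)) (hAmeas : ∀ i, Measurable (A i))
    (hAiid : iIndepFun A μ)
    (hAlaw : ∀ i α, μ (A i ⁻¹' {α}) = ENNReal.ofReal (p α))
    (F : (Fin D → ℕ) → ℕ → Ω → ℝ)
    (hFL2 : ∀ α n, MemLp (F α n) 2 μ)
    (m : (Fin D → ℕ) → ℝ)
    (hFmean : ∀ α, ∀ n, 1 ≤ n → (∫ ω, F α n ω ∂μ) = m α)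
    (hFiIndep : iIndepFun
      (fun α : Fin D → ℕ => fun ω => fun n : ℕ => F α n ω) μ)
    (hFindepA : IndepFun (fun ω => fun q : (Fin D → ℕ) × ℕ => F q.1 q.2 ω)
      (fun ω => fun i : Fin M => A i ω) μ)
    (V : (Fin D → ℕ) → ℝ)
    (hVar : ∀ α, ∀ n, 1 ≤ n →
      (∫ ω, (F α n ω - m α) ^ 2 ∂μ) ≤ V α / n)
    (hmV : ∀ α, m α ^ 2 ≤ V α)
    (hVp : Summable (fun α : Fin D → ℕ => V α / p α))
    (hVsqrt : Summable (fun α : Fin D → ℕ => Real.sqrt (V α)))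
    (N : (Fin D → ℕ) → Ω → ℕ)
    (hN : ∀ α ω, N α ω = (Finset.univ.filter (fun i : Fin M => A i ω = α)).card)
    (Fhat : Ω → ℝ)
    (hFhat : ∀ ω, Fhat ω = ∑' α : Fin D → ℕ,
      ((N α ω : ℝ) / (M * p α)) * F α (N α ω) ω) :
    MemLp Fhat 2 μ ∧
      (∫ ω, (Fhat ω - ∑' α : Fin D → ℕ, m α) ^ 2 ∂μ) ≤
        (4 / M) * ((∑' α : Fin D → ℕ, V α / p α) +
          (∑' α : Fin D → ℕ, Real.sqrt (V α)) ^ 2) := by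
  obtain rfl : N = fun α ω => drawCount (fun i => A i ω) α := funext₂ hN
  have hlaw : ∀ i α, μ.real (A i ⁻¹' {α}) = p α := fun i α => by
    rw [measureReal_def, hAlaw, ENNReal.toReal_ofReal (hp α).le]
  have hm : Summable m :=
    (hVsqrt.of_nonneg_of_le (fun α => abs_nonneg _) fun α => Real.abs_le_sqrt (hmV α)).of_abs
  have hsum : ∀ ω, HasSum (fun α => drawCount (fun i => A i ω) α / (M * p α) *
      F α (drawCount (fun i => A i ω) α) ω - m α) (Fhat ω - ∑' α, m α) := fun ω => by
    rw [hFhat]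
    exact (summable_apply_drawCount _ (f := fun α n => n / (M * p α) * F α n ω)
      fun α => by simp).hasSum.sub hm.hasSum
  have hterm : ∀ α, MemLp (fun ω => drawCount (fun i => A i ω) α / (M * p α) *
      F α (drawCount (fun i => A i ω) α) ω - m α) 2 μ := fun α =>
    memLp_drawCount_eval hAmeas α (G := fun n ω => n / (M * p α) * F α n ω - m α)
      fun n => ((hFL2 α n).const_mul _).sub (memLp_const _)
  have hpartial : ∀ s : Finset _, ∑ α ∈ s, V α / p α ≤ ∑' α, V α / p α := fun s =>
    hVp.sum_le_tsum s fun α _ => div_nonneg ((sq_nonneg _).trans (hmV α)) (hp α).le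
  have hbound : ∀ s, ∫ ω, (∑ α ∈ s, (drawCount (fun i => A i ω) α / (M * p α) *
      F α (drawCount (fun i => A i ω) α) ω - m α)) ^ 2 ∂μ ≤ 4 / M * ∑' α, V α / p α := fun s =>
    (integral_sq_sum_estimator_sub_le hM hp hAmeas hAiid hlaw hFL2 hFmean hFiIndep hFindepA hVar
      hmV s).trans (by gcongr; exact hpartial s)
  obtain ⟨hL2, hle⟩ := memLp_two_and_integral_sq_le_of_hasSum hterm hsum hbound
  refine ⟨?_, hle.trans ?_⟩
  · simpa [Pi.add_def] using hL2.add (memLp_const (∑' α, m α))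
  gcongr
  exact le_add_of_nonneg_right (sq_nonneg _)

/-- variance bound for the randomized multi-index estimator.
Indices `A 1, …, A M` are drawn i.i.d. from a positive pmf `p` on `ℤ₊^D`;
`N α` counts the draws equal to `α`; the estimators `F α n` (for `n ≥ 1`) are
square-integrable with mean `m α` independent of `n`, `F α 0 = 0`, the families
`(F α n)_n` for distinct `α` are mutually independent and independent of the
draws. If `E[(F α n - m α)²] ≤ V α / n`, `(m α)² ≤ V α`, `Σ_α V α / p α < ∞`
and `Σ_α √(V α) < ∞`, then `F̂ = Σ_α (N α / (M p α)) F α (N α)` is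
square-integrable and
`E[(F̂ - Σ_α m α)²] ≤ (4/M)(Σ_α V α / p α + (Σ_α √(V α))²)`. -/
theorem rMIMC_variance_bound {Ω : Type*} [MeasurableSpace Ω]
    (μ : Measure Ω) [IsProbabilityMeasure μ]
    (D M : ℕ) (hD : 1 ≤ D) (hM : 1 ≤ M)
    (p : (Fin D → ℕ) → ℝ) (hp : ∀ α, 0 < p α) (hpsum : ∑' α, p α = 1)
    (A : Fin M → Ω → (Fin D → ℕ)) (hAmeas : ∀ i, Measurable (A i))
    (hAiid : iIndepFun A μ)
    (hAlaw : ∀ i α, μ (A i ⁻¹' {α}) = ENNReal.ofReal (p α))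
    (F : (Fin D → ℕ) → ℕ → Ω → ℝ)
    (hFL2 : ∀ α n, MemLp (F α n) 2 μ)
    (hF0 : ∀ α ω, F α 0 ω = 0)
    (m : (Fin D → ℕ) → ℝ)
    (hFmean : ∀ α, ∀ n, 1 ≤ n → (∫ ω, F α n ω ∂μ) = m α)
    (hFiIndep : iIndepFun
      (fun α : Fin D → ℕ => fun ω => fun n : ℕ => F α n ω) μ)
    (hFindepA : IndepFun (fun ω => fun q : (Fin D → ℕ) × ℕ => F q.1 q.2 ω)
      (fun ω => fun i : Fin M => A i ω) μ)
    (V : (Fin D → ℕ) → ℝ) (hV0 : ∀ α, 0 ≤ V α)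
    (hVar : ∀ α, ∀ n, 1 ≤ n →
      (∫ ω, (F α n ω - m α) ^ 2 ∂μ) ≤ V α / n)
    (hmV : ∀ α, m α ^ 2 ≤ V α)
    (hVp : Summable (fun α : Fin D → ℕ => V α / p α))
    (hVsqrt : Summable (fun α : Fin D → ℕ => Real.sqrt (V α)))
    (N : (Fin D → ℕ) → Ω → ℕ)
    (hN : ∀ α ω, N α ω = (Finset.univ.filter (fun i : Fin M => A i ω = α)).card)
    (Fhat : Ω → ℝ)
    (hFhat : ∀ ω, Fhat ω = ∑' α : Fin D → ℕ,
      ((N α ω : ℝ) / (M * p α)) * F α (N α ω) ω) :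
    MemLp Fhat 2 μ ∧
      (∫ ω, (Fhat ω - ∑' α : Fin D → ℕ, m α) ^ 2 ∂μ) ≤
        (4 / M) * ((∑' α : Fin D → ℕ, V α / p α) +
          (∑' α : Fin D → ℕ, Real.sqrt (V α)) ^ 2) :=
  rMIMC_variance_bound_general μ D M hM p hp A hAmeas hAiid hAlaw F hFL2 m hFmean hFiIndep hFindepA
    V hVar hmV hVp hVsqrt N hN Fhat hFhat
end

section
/- For all real numbers a, b, c, d, setting m := max(|a|, |b|, |c|, |d|), one has |e^a − e^b − e^c + e^d| ≤ e^{5m} · ( |a − b − c + d| + |b − d|·|c − d| ). -/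
lemma exp_sub_exp_le_aux {x y : ℝ} (h : x ≤ y) :
    Real.exp y - Real.exp x ≤ Real.exp y * (y - x) := by
  have h1 := Real.add_one_le_exp (x - y)
  have h2 : Real.exp x = Real.exp y * Real.exp (x - y) := by
    rw [← Real.exp_add]; ring_nf
  nlinarith [Real.exp_pos y]

lemma abs_exp_sub_exp_le (x y : ℝ) :
    |Real.exp x - Real.exp y| ≤ Real.exp (max x y) * |x - y| := by
  rcases le_total x y with h | h
  · rw [max_eq_right h, abs_sub_comm, abs_of_nonneg (sub_nonneg.mpr (Real.exp_le_exp.mpr h)),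
      abs_sub_comm x y, abs_of_nonneg (sub_nonneg.mpr h)]
    exact exp_sub_exp_le_aux h
  · rw [max_eq_left h, abs_of_nonneg (sub_nonneg.mpr (Real.exp_le_exp.mpr h)),
      abs_of_nonneg (sub_nonneg.mpr h)]
    exact exp_sub_exp_le_aux h

/-- pointwise bound on the second-order mixed difference of the
exponential: with `m = max(|a|,|b|,|c|,|d|)`,
`|e^a - e^b - e^c + e^d| ≤ e^(5m) (|a - b - c + d| + |b - d||c - d|)`. -/
theorem exp_mixed_difference_bound (a b c d : ℝ) :
    |Real.exp a - Real.exp b - Real.exp c + Real.exp d| ≤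
      Real.exp (5 * max (max |a| |b|) (max |c| |d|)) *
        (|a - b - c + d| + |b - d| * |c - d|) := by
  set m : ℝ := max (max |a| |b|) (max |c| |d|) with hm
  have ha : |a| ≤ m := le_max_of_le_left (le_max_left _ _)
  have hb : |b| ≤ m := le_max_of_le_left (le_max_right _ _)
  have hc : |c| ≤ m := le_max_of_le_right (le_max_left _ _)
  have hd : |d| ≤ m := le_max_of_le_right (le_max_right _ _)
  have hm0 : 0 ≤ m := le_trans (abs_nonneg a) ha
  -- decomposition identity
  have hdd : Real.exp d * Real.exp (-d) = 1 := by
    rw [← Real.exp_add]; simp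
  have hbc : Real.exp (b + c - d) = Real.exp b * Real.exp c * Real.exp (-d) := by
    rw [← Real.exp_add, ← Real.exp_add]; ring_nf
  have hid : Real.exp a - Real.exp b - Real.exp c + Real.exp d =
      (Real.exp a - Real.exp (b + c - d)) +
        (Real.exp b - Real.exp d) * (Real.exp c - Real.exp d) * Real.exp (-d) := by
    rw [hbc]
    linear_combination (Real.exp b + Real.exp c - Real.exp d) * hdd
  rw [hid]
  -- bound the first term
  have h1 : |Real.exp a - Real.exp (b + c - d)| ≤ Real.exp (3 * m) * |a - b - c + d| := by
    have := abs_exp_sub_exp_le a (b + c - d)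
    have hmax : max a (b + c - d) ≤ 3 * m := by
      have h1 : a ≤ m := le_trans (le_abs_self a) ha
      have h2 : b + c - d ≤ 3 * m := by
        have := le_trans (le_abs_self b) hb
        have := le_trans (le_abs_self c) hc
        have := le_trans (neg_le_abs d) hd
        linarith
      exact max_le (by linarith) h2
    calc |Real.exp a - Real.exp (b + c - d)|
        ≤ Real.exp (max a (b + c - d)) * |a - (b + c - d)| := this
      _ ≤ Real.exp (3 * m) * |a - b - c + d| := by
          have : a - (b + c - d) = a - b - c + d := by ring
          rw [this]
          exact mul_le_mul_of_nonneg_right (Real.exp_le_exp.mpr hmax) (abs_nonneg _)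
  -- bound the second term
  have h2 : |(Real.exp b - Real.exp d) * (Real.exp c - Real.exp d) * Real.exp (-d)| ≤
      Real.exp (3 * m) * (|b - d| * |c - d|) := by
    rw [abs_mul, abs_mul, abs_of_nonneg (Real.exp_pos (-d)).le]
    have hb' : |Real.exp b - Real.exp d| ≤ Real.exp m * |b - d| := by
      refine le_trans (abs_exp_sub_exp_le b d) ?_
      refine mul_le_mul_of_nonneg_right (Real.exp_le_exp.mpr ?_) (abs_nonneg _)
      exact max_le (le_trans (le_abs_self b) hb) (le_trans (le_abs_self d) hd)
    have hc' : |Real.exp c - Real.exp d| ≤ Real.exp m * |c - d| := by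
      refine le_trans (abs_exp_sub_exp_le c d) ?_
      refine mul_le_mul_of_nonneg_right (Real.exp_le_exp.mpr ?_) (abs_nonneg _)
      exact max_le (le_trans (le_abs_self c) hc) (le_trans (le_abs_self d) hd)
    have hd' : Real.exp (-d) ≤ Real.exp m :=
      Real.exp_le_exp.mpr (le_trans (neg_le_abs d) hd)
    calc |Real.exp b - Real.exp d| * |Real.exp c - Real.exp d| * Real.exp (-d)
        ≤ (Real.exp m * |b - d|) * (Real.exp m * |c - d|) * Real.exp m := by
          gcongr <;> positivity
      _ = Real.exp m * Real.exp m * Real.exp m * (|b - d| * |c - d|) := by ring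
      _ = Real.exp (3 * m) * (|b - d| * |c - d|) := by
          rw [← Real.exp_add, ← Real.exp_add]; ring_nf
  have h35 : Real.exp (3 * m) ≤ Real.exp (5 * m) := Real.exp_le_exp.mpr (by linarith)
  calc |(Real.exp a - Real.exp (b + c - d)) +
        (Real.exp b - Real.exp d) * (Real.exp c - Real.exp d) * Real.exp (-d)|
      ≤ |Real.exp a - Real.exp (b + c - d)| +
        |(Real.exp b - Real.exp d) * (Real.exp c - Real.exp d) * Real.exp (-d)| :=
        abs_add_le _ _
    _ ≤ Real.exp (3 * m) * |a - b - c + d| + Real.exp (3 * m) * (|b - d| * |c - d|) := by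
        linarith
    _ = Real.exp (3 * m) * (|a - b - c + d| + |b - d| * |c - d|) := by ring
    _ ≤ Real.exp (5 * m) * (|a - b - c + d| + |b - d| * |c - d|) := by
        refine mul_le_mul_of_nonneg_right h35 ?_
        positivity
end

section
/- Let (Ω, ℱ, P) be a probability space, let A and B be square-integrable real random variables, let a ∈ ℝ and b ≥ Z_min > 0 be real constants. Then E[ ( A/max(B, Z_min) − a/b )² ] ≤ (2/Z_min²)·( E[(A − a)²] + (a/b)²·E[(B − b)²] ). -/
/-!
Write `M = max B Zmin`. Since `b ≥ Zmin`, truncating at `Zmin` fixes `b` and is `1`-Lipschitz, so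
`|M - b| ≤ |B - b|`. The identity `A / M - a / b = ((A - a) + (a / b) (b - M)) / M`, the bound
`M ≥ Zmin` and `(x + y)² ≤ 2 (x² + y²)` give the inequality pointwise; integrating it proves the
theorem, the right-hand side being integrable because `A` and `B` are square-integrable.
-/

open MeasureTheory

lemma abs_max_sub_le_abs_sub {B b Zmin : ℝ} (hb : Zmin ≤ b) :
    |max B Zmin - b| ≤ |B - b| := by
  simpa only [max_eq_left hb] using abs_max_sub_max_le_abs B b Zmin

lemma div_sub_div_eq_sub_add_mul_sub_div {A M a b : ℝ} (hM : M ≠ 0) (hb : b ≠ 0) :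
    A / M - a / b = ((A - a) + a / b * (b - M)) / M := by
  field_simp
  ring

lemma sq_div_max_sub_div_le (A B a b Zmin : ℝ) (hZ : 0 < Zmin) (hb : Zmin ≤ b) :
    (A / max B Zmin - a / b) ^ 2 ≤
      2 / Zmin ^ 2 * ((A - a) ^ 2 + (a / b) ^ 2 * (B - b) ^ 2) := by
  set M := max B Zmin
  have hZM : Zmin ≤ M := le_max_right B Zmin
  have hM : 0 < M := hZ.trans_le hZM
  have hbM : (b - M) ^ 2 ≤ (B - b) ^ 2 :=
    sq_le_sq.mpr ((abs_sub_comm b M).trans_le (abs_max_sub_le_abs_sub hb))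
  rw [div_sub_div_eq_sub_add_mul_sub_div hM.ne' (hZ.trans_le hb).ne', div_pow]
  calc ((A - a) + a / b * (b - M)) ^ 2 / M ^ 2
      ≤ ((A - a) + a / b * (b - M)) ^ 2 / Zmin ^ 2 := by gcongr
    _ ≤ 2 * ((A - a) ^ 2 + (a / b) ^ 2 * (b - M) ^ 2) / Zmin ^ 2 := by
      rw [← mul_pow]
      gcongr
      exact add_sq_le
    _ ≤ 2 * ((A - a) ^ 2 + (a / b) ^ 2 * (B - b) ^ 2) / Zmin ^ 2 := by gcongr
    _ = 2 / Zmin ^ 2 * ((A - a) ^ 2 + (a / b) ^ 2 * (B - b) ^ 2) := by ring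

lemma MeasureTheory.MemLp.integrable_sub_const_sq {Ω : Type*} [MeasurableSpace Ω] {μ : Measure Ω}
    [IsFiniteMeasure μ] {X : Ω → ℝ} (hX : MemLp X 2 μ) (c : ℝ) :
    Integrable (fun ω => (X ω - c) ^ 2) μ :=
  (hX.sub (memLp_const c)).integrable_sq

/-- mean-square error bound for the self-normalized ratio
estimator `A / max(B, Zmin)` of `a/b`, with `0 < Zmin ≤ b`:
`E[(A/max(B,Zmin) - a/b)²] ≤ (2/Zmin²)(E[(A-a)²] + (a/b)² E[(B-b)²])`. -/
theorem ratio_estimator_mse_bound {Ω : Type*} [MeasurableSpace Ω]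
    (μ : Measure Ω) [IsProbabilityMeasure μ] (A B : Ω → ℝ)
    (hA : MemLp A 2 μ) (hB : MemLp B 2 μ)
    (a b Zmin : ℝ) (hZ : 0 < Zmin) (hb : Zmin ≤ b) :
    ∫ ω, (A ω / max (B ω) Zmin - a / b) ^ 2 ∂μ ≤
      (2 / Zmin ^ 2) *
        ((∫ ω, (A ω - a) ^ 2 ∂μ) + (a / b) ^ 2 * ∫ ω, (B ω - b) ^ 2 ∂μ) := by
  have hA2 := hA.integrable_sub_const_sq a
  have hB2 := (hB.integrable_sub_const_sq b).const_mul ((a / b) ^ 2)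
  calc ∫ ω, (A ω / max (B ω) Zmin - a / b) ^ 2 ∂μ
      ≤ ∫ ω, 2 / Zmin ^ 2 * ((A ω - a) ^ 2 + (a / b) ^ 2 * (B ω - b) ^ 2) ∂μ :=
        integral_mono_of_nonneg (.of_forall fun _ => sq_nonneg _)
          ((hA2.add hB2).const_mul _)
          (.of_forall fun ω => sq_div_max_sub_div_le _ _ a b Zmin hZ hb)
    _ = (2 / Zmin ^ 2) *
        ((∫ ω, (A ω - a) ^ 2 ∂μ) + (a / b) ^ 2 * ∫ ω, (B ω - b) ^ 2 ∂μ) := by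
      rw [integral_const_mul, integral_add hA2 hB2, integral_const_mul]
end
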